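/- In the shot-noise Cox process setup, assume Φ is a simple point process, fix k ≥ 1 and measurable f : X → [0,∞), g : X^k → [0,∞), and assume: (a) almost surely E[∫_{D_k} g(x₁,…,x_k) exp(−Φ(f) + Σ_{j=1}^k f(x_j)) Φ^{⊗k}(dx₁ … dx_k) | Λ] = exp(−∫_X (1 − e^{−f}) T_Λ dμ) · ∫_{X^k} g(x₁,…,x_k) ∏_{j=1}^k T_Λ(x_j) μ^{⊗k}(dx) (the multivariate Mecke identity of a Poisson process with intensity T_Λ·μ, applied conditionally); and (b) Λ satisfies the Poisson exponential-moment formula with intensity ν. Then E[∫_{D_k} g(x₁,…,x_k) exp(−Φ(f) + Σ_{j=1}^k f(x_j)) Φ^{⊗k}(dx)] = ∫_{X^k} g(x₁,…,x_k) · L(f) · Σ_{𝒫} ∏_{J∈𝒫} ψ_{x_J}(f) μ^{⊗k}(dx), where L(f) = exp(−∫_{X×(0,∞)} (1 − exp(−γ ∫_X (1−e^{−f(y)}) κ(y;θ) μ(dy))) ν(dθ,dγ)) and ψ_{x_J}(f) = ∫_{X×(0,∞)} exp(−γ ∫_X (1−e^{−f(y)}) κ(y;θ) μ(dy)) · γ^{|J|}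 ∏_{j∈J} κ(x_j; θ) ν(dθ,dγ). This identity expresses that, for M_Φ^{(k)}-a.e. (x₁,…,x_k), the reduced Palm version of the shot-noise Cox process Φ at (x₁,…,x_k) is distributed as the independent sum of Φ and component processes Φ_{ζ_{x_J}} over the blocks J of a random partition T of {1,…,k} with P(T = 𝒫) proportional to ∏_{J∈𝒫} η(x_J). -/

import Mathlib

/-! Conditionally on `Λ`, the Mecke identity (a) turns the left side into
`E[e^{-∫ (1 - e^{-f}) T_Λ dμ} ∫ g(t) ∏ⱼ T_Λ(tⱼ) dμ^k(t)]`. Exchanging the order of integration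
writes the exponent as `Λ(h)` with `h(θ, γ) = γ ∫ (1 - e^{-f}) κ(·; θ) dμ` and each `T_Λ(tⱼ)` as
`Λ(cⱼ)` with `cⱼ(θ, γ) = γ κ(tⱼ; θ)`; after Tonelli in `(ω, t)`, the exponential-moment
formula (b) evaluates `E[e^{-Λ(h)} ∏ⱼ Λ(cⱼ)]` for each `t`. Tonelli needs `Λ` to be s-finite,
and it is so almost surely: the Laplace functional forces `Λ(w) < ∞` a.s. for a positive
`ν`-integrable `w`. -/

open MeasureTheory

/-- `expNeg t = e^{-t}` for `t ∈ [0,∞]`, with `expNeg ∞ = 0`. -/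
noncomputable def expNeg (t : ENNReal) : ENNReal :=
  if t = ⊤ then 0 else ENNReal.ofReal (Real.exp (-t.toReal))

/-- The set `D_k` of `k`-tuples with pairwise distinct coordinates. -/
def distinctTuples (X : Type*) (k : ℕ) : Set (Fin k → X) :=
  {t : Fin k → X | Function.Injective t}

/-- A random measure `Λ` satisfies the Poisson exponential-moment formula with
intensity `ν`: for every `m ≥ 1` and measurable `h, c₁, …, c_m ≥ 0`,
`E[e^{−Λ(h)} ∏ⱼ Λ(cⱼ)] = e^{−∫(1−e^{−h})dν} Σ_𝒫 ∏_{J∈𝒫} ∫ e^{−h} ∏_{j∈J} cⱼ dν`. -/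
def PoissonExpMoment {Ω Y : Type*} [MeasurableSpace Ω] [MeasurableSpace Y]
    (P : Measure Ω) (Λ : Ω → Measure Y) (ν : Measure Y) : Prop :=
  ∀ (m : ℕ), 1 ≤ m → ∀ h : Y → ENNReal, Measurable h →
    ∀ c : Fin m → Y → ENNReal, (∀ j, Measurable (c j)) →
    ∫⁻ ω, expNeg (∫⁻ z, h z ∂(Λ ω)) * ∏ j, ∫⁻ z, c j z ∂(Λ ω) ∂P
      = expNeg (∫⁻ z, (1 - expNeg (h z)) ∂ν)
        * ∑ pt : Finpartition (Finset.univ : Finset (Fin m)),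
            ∏ J ∈ pt.parts, ∫⁻ z, expNeg (h z) * ∏ j ∈ J, c j z ∂ν

open ProbabilityTheory Filter Topology
open scoped ENNReal NNReal

lemma expNeg_top : expNeg ⊤ = 0 := by simp [expNeg]

@[fun_prop]
lemma measurable_expNeg : Measurable expNeg :=
  Measurable.ite (measurableSet_singleton ⊤) measurable_const
    (ENNReal.measurable_ofReal.comp (Real.measurable_exp.comp ENNReal.measurable_toReal.neg))

lemma expNeg_le_one (t : ℝ≥0∞) : expNeg t ≤ 1 := by
  unfold expNeg
  split
  · exact zero_le_one
  · exact ENNReal.ofReal_le_one.2 (Real.exp_le_one_iff.2 (neg_nonpos.2 ENNReal.toReal_nonneg))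

lemma expNeg_anti : Antitone expNeg := by
  intro a b hab
  by_cases hb : b = ⊤
  · simp [hb, expNeg_top]
  have ha : a ≠ ⊤ := ne_top_of_le_ne_top hb hab
  simp only [expNeg, if_neg ha, if_neg hb]
  gcongr

lemma one_le_add_expNeg (t : ℝ≥0∞) : 1 ≤ t + expNeg t := by
  by_cases ht : t = ⊤
  · simp [ht]
  rw [expNeg, if_neg ht, ← ENNReal.ofReal_toReal ht, ENNReal.toReal_ofReal ENNReal.toReal_nonneg,
    ← ENNReal.ofReal_add ENNReal.toReal_nonneg (Real.exp_nonneg _), ← ENNReal.ofReal_one]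
  exact ENNReal.ofReal_le_ofReal (by linarith [Real.add_one_le_exp (-t.toReal)])

section Kernel

variable {α β : Type*} [MeasurableSpace α] [MeasurableSpace β]

/-- Normalising by `1 + ∫ h ∂κ a` turns `κ.withDensity h` into a finite kernel, of which `κ` is
a density transform. -/
lemma isSFiniteKernel_of_lintegral_ne_top (κ : Kernel α β) {h : β → ℝ≥0∞} (hh : Measurable h)
    (h_pos : ∀ b, h b ≠ 0) (hκ : ∀ a, ∫⁻ b, h b ∂κ a ≠ ∞) : IsSFiniteKernel κ := by
  set d : α → β → ℝ≥0∞ := fun a b => h b * (1 + ∫⁻ b, h b ∂κ a)⁻¹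
  have hI : Measurable fun a => ∫⁻ b, h b ∂κ a := hh.lintegral_kernel
  have hd : Measurable (Function.uncurry d) :=
    (hh.comp measurable_snd).mul (measurable_const.add (hI.comp measurable_fst)).inv
  have hd_ne_zero (a b) : d a b ≠ 0 := mul_ne_zero (h_pos b) (by simpa using hκ a)
  let η : Kernel α β :=
    { toFun := fun a => (κ a).withDensity (d a)
      measurable' := by
        refine Measure.measurable_of_measurable_coe _ fun s hs => ?_
        simp only [withDensity_apply _ hs, d, lintegral_mul_const _ hh, ← lintegral_indicator hs]
        exact (hh.indicator hs).lintegral_kernel.mul (measurable_const.add hI).inv }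
  have : IsFiniteKernel η := by
    refine ⟨⟨1, ENNReal.one_lt_top, fun a => ?_⟩⟩
    change (κ a).withDensity (d a) Set.univ ≤ 1
    rw [withDensity_apply _ MeasurableSet.univ, Measure.restrict_univ, lintegral_mul_const _ hh,
      ← div_eq_mul_inv]
    exact ENNReal.div_le_of_le_mul (by rw [one_mul]; exact le_add_self)
  have hκη : κ = η.withDensity fun a b => (d a b)⁻¹ := by
    ext1 a
    rw [Kernel.withDensity_apply _ hd.inv]
    refine (withDensity_inv_same (hd.comp measurable_prodMk_left) (.of_forall (hd_ne_zero a))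
      ?_).symm
    filter_upwards [ae_lt_top hh (hκ a)] with b hb
    exact ENNReal.mul_ne_top hb.ne (by simp)
  rw [hκη]
  exact Kernel.IsSFiniteKernel.withDensity η fun a b => ENNReal.inv_ne_top.2 (hd_ne_zero a b)

end Kernel

def HasPoissonLaplace {Ω Y : Type*} [MeasurableSpace Ω] [MeasurableSpace Y]
    (P : Measure Ω) (Λ : Ω → Measure Y) (ν : Measure Y) : Prop :=
  ∀ h : Y → ℝ≥0∞, Measurable h →
    ∫⁻ ω, expNeg (∫⁻ z, h z ∂(Λ ω)) ∂P = expNeg (∫⁻ z, (1 - expNeg (h z)) ∂ν)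

section Laplace

variable {Ω Y : Type*} [MeasurableSpace Ω] [MeasurableSpace Y] {P : Measure Ω}
  {Λ : Ω → Measure Y} {ν : Measure Y}

/-- For `ε > 0`, `E[e^{-ε Λ(h)}] ≥ e^{-ε ν(h)} ≥ 1 - ε ν(h)` while `E[e^{-ε Λ(h)}] ≤ P(Λ(h) < ∞)`;
let `ε → 0`. -/
lemma HasPoissonLaplace.ae_lintegral_ne_top [IsProbabilityMeasure P] (hΛ : Measurable Λ)
    (hL : HasPoissonLaplace P Λ ν) {h : Y → ℝ≥0∞} (hh : Measurable h) (hν : ∫⁻ z, h z ∂ν ≠ ∞) :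
    ∀ᵐ ω ∂P, ∫⁻ z, h z ∂Λ ω ≠ ∞ := by
  set S := {ω | ∫⁻ z, h z ∂Λ ω ≠ ∞}
  have hS : MeasurableSet S :=
    (((Measure.measurable_lintegral hh).comp hΛ) (measurableSet_singleton ∞)).compl
  have key (ε : ℝ≥0∞) (hε : ε ≠ 0) : 1 - ε * ∫⁻ z, h z ∂ν ≤ P S := by
    have h_out (ω) (hω : ω ∉ S) : ∫⁻ z, ε * h z ∂Λ ω = ∞ := by
      rw [lintegral_const_mul _ hh, not_not.1 hω, ENNReal.mul_top hε]
    calc 1 - ε * ∫⁻ z, h z ∂ν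
        ≤ expNeg (ε * ∫⁻ z, h z ∂ν) := tsub_le_iff_left.2 (one_le_add_expNeg _)
      _ ≤ expNeg (∫⁻ z, (1 - expNeg (ε * h z)) ∂ν) := by
        refine expNeg_anti ?_
        rw [← lintegral_const_mul _ hh]
        exact lintegral_mono fun z => tsub_le_iff_right.2 (one_le_add_expNeg _)
      _ = ∫⁻ ω, expNeg (∫⁻ z, ε * h z ∂Λ ω) ∂P := (hL _ (hh.const_mul ε)).symm
      _ ≤ ∫⁻ ω, S.indicator 1 ω ∂P := lintegral_mono fun ω => by
        by_cases hω : ω ∈ S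
        · simpa [hω] using expNeg_le_one _
        · simp [hω, h_out ω hω, expNeg_top]
      _ = P S := lintegral_indicator_one hS
  have h_lim : Tendsto (fun n : ℕ => 1 - (n : ℝ≥0∞)⁻¹ * ∫⁻ z, h z ∂ν) atTop (𝓝 1) := by
    simpa using ENNReal.Tendsto.sub tendsto_const_nhds
      (ENNReal.Tendsto.mul_const ENNReal.tendsto_inv_nat_nhds_zero (.inr hν))
      (.inl ENNReal.one_ne_top)
  have hPS : P S = 1 := le_antisymm prob_le_one
    (le_of_tendsto' h_lim fun n => key _ (ENNReal.inv_ne_zero.2 (ENNReal.natCast_ne_top n)))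
  exact ae_iff.2 ((prob_compl_eq_zero_iff hS).2 hPS)

lemma HasPoissonLaplace.exists_isSFiniteKernel_ae_eq [IsProbabilityMeasure P] [SigmaFinite ν]
    (hΛ : Measurable Λ) (hL : HasPoissonLaplace P Λ ν) :
    ∃ Λ' : Kernel Ω Y, IsSFiniteKernel Λ' ∧ ∀ᵐ ω ∂P, Λ' ω = Λ ω := by
  obtain ⟨h, h_pos, hh, hν⟩ := exists_pos_lintegral_lt_of_sigmaFinite ν one_ne_zero
  have hh' : Measurable fun z => (h z : ℝ≥0∞) := measurable_coe_nnreal_ennreal.comp hh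
  have hS : MeasurableSet {ω | ∫⁻ z, h z ∂Λ ω ≠ ∞} :=
    (((Measure.measurable_lintegral hh').comp hΛ) (measurableSet_singleton ∞)).compl
  refine ⟨Kernel.piecewise hS ⟨Λ, hΛ⟩ 0, ?_, ?_⟩
  · refine isSFiniteKernel_of_lintegral_ne_top _ hh' (fun z => by simpa using (h_pos z).ne') ?_
    intro ω
    by_cases hω : ω ∈ {ω | ∫⁻ z, h z ∂Λ ω ≠ ∞}
    · rw [Kernel.piecewise_apply, if_pos hω]
      exact hω
    · simp [Kernel.piecewise_apply, hω]
  · filter_upwards [hL.ae_lintegral_ne_top hΛ hh' (hν.trans ENNReal.one_lt_top).ne] with ω hω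
    simp [Kernel.piecewise_apply, hω]

end Laplace

lemma PoissonExpMoment.congr_ae {Ω Y : Type*} [MeasurableSpace Ω] [MeasurableSpace Y]
    {P : Measure Ω} {Λ Λ' : Ω → Measure Y} {ν : Measure Y} (hb : PoissonExpMoment P Λ ν)
    (hΛ' : ∀ᵐ ω ∂P, Λ' ω = Λ ω) : PoissonExpMoment P Λ' ν := by
  intro m hm h hh c hc
  rw [← hb m hm h hh c hc]
  exact lintegral_congr_ae (hΛ'.mono fun ω hω => by simp only [hω])

section ShotNoise

variable {Ω X : Type*} [MeasurableSpace Ω] [MeasurableSpace X] {κ : X → X → ℝ≥0∞}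

/-- The paper's `T_m(y) = ∫ γ κ(y; θ) m(dθ, dγ)`. -/
noncomputable def shotNoise (κ : X → X → ℝ≥0∞) (m : Measure (X × ℝ≥0)) (y : X) : ℝ≥0∞ :=
  ∫⁻ z, z.2 * κ y z.1 ∂m

lemma measurable_shotNoise (hκ : Measurable (Function.uncurry κ)) (Λ : Kernel Ω (X × ℝ≥0))
    [IsSFiniteKernel Λ] : Measurable fun p : Ω × X => shotNoise κ (Λ p.1) p.2 :=
  Measurable.lintegral_kernel_prod_right (κ := Kernel.prodMkRight X Λ)
    (f := fun p z => z.2 * κ p.2 z.1) (by fun_prop)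

lemma lintegral_mul_shotNoise (hκ : Measurable (Function.uncurry κ)) (μ : Measure X) [SFinite μ]
    (m : Measure (X × ℝ≥0)) [SFinite m] {c : X → ℝ≥0∞} (hc : Measurable c) :
    ∫⁻ y, c y * shotNoise κ m y ∂μ = ∫⁻ z, z.2 * ∫⁻ y, c y * κ y z.1 ∂μ ∂m := by
  calc ∫⁻ y, c y * shotNoise κ m y ∂μ = ∫⁻ y, ∫⁻ z, c y * (z.2 * κ y z.1) ∂m ∂μ := by
        refine lintegral_congr fun y => (lintegral_const_mul _ ?_).symm
        fun_prop
    _ = ∫⁻ z, ∫⁻ y, c y * (z.2 * κ y z.1) ∂μ ∂m := lintegral_lintegral_swap (by fun_prop)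
    _ = ∫⁻ z, z.2 * ∫⁻ y, c y * κ y z.1 ∂μ ∂m := by
        refine lintegral_congr fun z => ?_
        rw [← lintegral_const_mul _ (by fun_prop)]
        exact lintegral_congr fun y => mul_left_comm _ _ _

theorem PoissonExpMoment.lintegral_expNeg_mul_lintegral_prod_shotNoise {P : Measure Ω} [SFinite P]
    {μ : Measure X} [SigmaFinite μ] {ν : Measure (X × ℝ≥0)} (hκ : Measurable (Function.uncurry κ))
    {Λ : Kernel Ω (X × ℝ≥0)} [IsSFiniteKernel Λ] (hb : PoissonExpMoment P Λ ν)
    {k : ℕ} (hk : 1 ≤ k) {c : X → ℝ≥0∞} (hc : Measurable c)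
    {g : (Fin k → X) → ℝ≥0∞} (hg : Measurable g) :
    ∫⁻ ω, expNeg (∫⁻ y, c y * shotNoise κ (Λ ω) y ∂μ)
        * ∫⁻ t, g t * ∏ j, shotNoise κ (Λ ω) (t j) ∂(Measure.pi fun _ : Fin k => μ) ∂P
      = ∫⁻ t, g t
          * expNeg (∫⁻ z, (1 - expNeg ((z.2 : ℝ≥0∞) * ∫⁻ y, c y * κ y z.1 ∂μ)) ∂ν)
          * ∑ pt : Finpartition (Finset.univ : Finset (Fin k)),
              ∏ J ∈ pt.parts,
                ∫⁻ z, expNeg ((z.2 : ℝ≥0∞) * ∫⁻ y, c y * κ y z.1 ∂μ)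
                  * ((z.2 : ℝ≥0∞) ^ J.card * ∏ j ∈ J, κ (t j) z.1) ∂ν
        ∂(Measure.pi fun _ : Fin k => μ) := by
  set h : X × ℝ≥0 → ℝ≥0∞ := fun z => z.2 * ∫⁻ y, c y * κ y z.1 ∂μ
  have hh : Measurable h := by
    have : Measurable fun θ => ∫⁻ y, c y * κ y θ ∂μ :=
      Measurable.lintegral_prod_left (f := fun y θ => c y * κ y θ) (by fun_prop)
    fun_prop
  have hF : Measurable fun p : Ω × (Fin k → X) =>
      g p.2 * (expNeg (∫⁻ z, h z ∂Λ p.1) * ∏ j, shotNoise κ (Λ p.1) (p.2 j)) := by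
    refine (hg.comp measurable_snd).mul ((measurable_expNeg.comp
      (hh.lintegral_kernel.comp measurable_fst)).mul (Finset.measurable_prod _ fun j _ => ?_))
    exact (measurable_shotNoise hκ Λ).comp (measurable_fst.prodMk
      ((measurable_pi_apply j).comp measurable_snd))
  calc _ = ∫⁻ ω, ∫⁻ t, g t * (expNeg (∫⁻ z, h z ∂Λ ω) * ∏ j, shotNoise κ (Λ ω) (t j))
          ∂(Measure.pi fun _ : Fin k => μ) ∂P := by
        refine lintegral_congr fun ω => ?_
        have hgT : Measurable fun t => g t * ∏ j, shotNoise κ (Λ ω) (t j) := by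
          refine hg.mul (Finset.measurable_prod _ fun j _ => ?_)
          exact (measurable_shotNoise hκ Λ).comp
            (measurable_prodMk_left.comp (measurable_pi_apply j))
        rw [lintegral_mul_shotNoise hκ μ (Λ ω) hc, ← lintegral_const_mul _ hgT]
        exact lintegral_congr fun t => mul_left_comm _ _ _
    _ = ∫⁻ t, g t * ∫⁻ ω, expNeg (∫⁻ z, h z ∂Λ ω) * ∏ j, shotNoise κ (Λ ω) (t j) ∂P
          ∂(Measure.pi fun _ : Fin k => μ) := by
        rw [lintegral_lintegral_swap hF.aemeasurable]
        refine lintegral_congr fun t => lintegral_const_mul _ ?_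
        exact (measurable_expNeg.comp hh.lintegral_kernel).mul
          (Finset.measurable_prod _ fun j _ => (measurable_shotNoise hκ Λ).comp
            (measurable_id.prodMk measurable_const))
    _ = _ := by
        refine lintegral_congr fun t => ?_
        simp only [shotNoise]
        rw [hb k hk h hh (fun j z => z.2 * κ (t j) z.1) (fun j => by fun_prop), ← mul_assoc]
        simp only [Finset.prod_mul_distrib, Finset.prod_const, h]

end ShotNoise

theorem sncp_reduced_palm_campbell_laplace_general
    {Ω X : Type*} [MeasurableSpace Ω] [MeasurableSpace X]
    (P : Measure Ω) [IsProbabilityMeasure P]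
    (μ : Measure X) [SigmaFinite μ]
    (ν : Measure (X × NNReal)) [SigmaFinite ν]
    (κ : X → X → ENNReal) (hκ : Measurable (Function.uncurry κ))
    (Λ : Ω → Measure (X × NNReal)) (hΛmeas : Measurable Λ)
    (hΛ : ∀ h : X × NNReal → ENNReal, Measurable h →
      ∫⁻ ω, expNeg (∫⁻ z, h z ∂(Λ ω)) ∂P = expNeg (∫⁻ z, (1 - expNeg (h z)) ∂ν))
    (Φ : Ω → Measure X)
    (k : ℕ) (hk : 1 ≤ k)
    (f : X → ENNReal) (hf : Measurable f)
    (g : (Fin k → X) → ENNReal) (hg : Measurable g)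
    -- (a) conditional multivariate Mecke identity for `Φ` given `Λ`
    (ha : ∀ G : Measure (X × NNReal) → ENNReal, Measurable G →
      ∫⁻ ω, (∫⁻ t in distinctTuples X k,
            g t * expNeg ((∫⁻ y, f y ∂(Φ ω)) - ∑ j, f (t j))
          ∂(Measure.pi fun _ : Fin k => Φ ω)) * G (Λ ω) ∂P
        = ∫⁻ ω, (expNeg (∫⁻ y, (1 - expNeg (f y))
              * (∫⁻ z, (z.2 : ENNReal) * κ y z.1 ∂(Λ ω)) ∂μ)
            * ∫⁻ t, g t * ∏ j, (∫⁻ z, (z.2 : ENNReal) * κ (t j) z.1 ∂(Λ ω))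
                ∂(Measure.pi fun _ : Fin k => μ)) * G (Λ ω) ∂P)
    -- (b) Poisson exponential-moment formula for `Λ`
    (hb : PoissonExpMoment P Λ ν) :
    ∫⁻ ω, ∫⁻ t in distinctTuples X k,
        g t * expNeg ((∫⁻ y, f y ∂(Φ ω)) - ∑ j, f (t j))
      ∂(Measure.pi fun _ : Fin k => Φ ω) ∂P
      = ∫⁻ t, g t
          * expNeg (∫⁻ z, (1 - expNeg ((z.2 : ENNReal)
              * ∫⁻ y, (1 - expNeg (f y)) * κ y z.1 ∂μ)) ∂ν)
          * ∑ pt : Finpartition (Finset.univ : Finset (Fin k)),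
              ∏ J ∈ pt.parts,
                ∫⁻ z, expNeg ((z.2 : ENNReal) * ∫⁻ y, (1 - expNeg (f y)) * κ y z.1 ∂μ)
                  * ((z.2 : ENNReal) ^ J.card * ∏ j ∈ J, κ (t j) z.1) ∂ν
        ∂(Measure.pi fun _ : Fin k => μ) := by
  obtain ⟨Λ', _, hΛ'⟩ := HasPoissonLaplace.exists_isSFiniteKernel_ae_eq hΛmeas hΛ
  have hmecke := ha (fun _ => 1) measurable_const
  simp only [mul_one] at hmecke
  rw [hmecke, ← (hb.congr_ae hΛ').lintegral_expNeg_mul_lintegral_prod_shotNoise hκ hk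
    (by fun_prop : Measurable fun y => 1 - expNeg (f y)) hg]
  exact lintegral_congr_ae (hΛ'.mono fun ω hω => by simp only [shotNoise, hω])

/-- higher-order reduced Palm distributions of a shot-noise Cox
process, in Campbell–Laplace form.  Under the conditional multivariate Mecke
identity (a) and the Poisson exponential-moment formula (b) for `Λ`,
`E[∫_{D_k} g(x) e^{−Φ(f)+Σⱼf(xⱼ)} Φ^{⊗k}(dx)]
  = ∫ g(x) L(f) Σ_𝒫 ∏_{J∈𝒫} ψ_{x_J}(f) μ^{⊗k}(dx)`. -/
theorem sncp_reduced_palm_campbell_laplace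
    {Ω X : Type*} [MeasurableSpace Ω] [MeasurableSpace X]
    (P : Measure Ω) [IsProbabilityMeasure P]
    (μ : Measure X) [SigmaFinite μ]
    (ν : Measure (X × NNReal)) [SigmaFinite ν] (hν0 : ν {z | z.2 = 0} = 0)
    (κ : X → X → ENNReal) (hκ : Measurable (Function.uncurry κ))
    (hκ1 : ∀ θ : X, ∫⁻ y, κ y θ ∂μ = 1)
    (Λ : Ω → Measure (X × NNReal)) (hΛmeas : Measurable Λ)
    (hΛ : ∀ h : X × NNReal → ENNReal, Measurable h →
      ∫⁻ ω, expNeg (∫⁻ z, h z ∂(Λ ω)) ∂P = expNeg (∫⁻ z, (1 - expNeg (h z)) ∂ν))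
    (hTfin : ∀ᵐ ω ∂P, ∀ᵐ y ∂μ, (∫⁻ z, (z.2 : ENNReal) * κ y z.1 ∂(Λ ω)) ≠ ⊤)
    (Φ : Ω → Measure X) (hΦmeas : Measurable Φ)
    (hcond : ∀ f : X → ENNReal, Measurable f →
      ∀ G : Measure (X × NNReal) → ENNReal, Measurable G →
      ∫⁻ ω, expNeg (∫⁻ y, f y ∂(Φ ω)) * G (Λ ω) ∂P
        = ∫⁻ ω, expNeg (∫⁻ y, (1 - expNeg (f y))
            * (∫⁻ z, (z.2 : ENNReal) * κ y z.1 ∂(Λ ω)) ∂μ) * G (Λ ω) ∂P)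
    -- `Φ` is a simple point process
    (hpp : ∀ᵐ ω ∂P, ∀ B : Set X, MeasurableSet B → Φ ω B = ⊤ ∨ ∃ n : ℕ, Φ ω B = n)
    (hsimple : ∀ᵐ ω ∂P, ∀ y : X, Φ ω {y} ≤ 1)
    (k : ℕ) (hk : 1 ≤ k)
    (f : X → ENNReal) (hf : Measurable f)
    (g : (Fin k → X) → ENNReal) (hg : Measurable g)
    -- (a) conditional multivariate Mecke identity for `Φ` given `Λ`
    (ha : ∀ G : Measure (X × NNReal) → ENNReal, Measurable G →
      ∫⁻ ω, (∫⁻ t in distinctTuples X k,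
            g t * expNeg ((∫⁻ y, f y ∂(Φ ω)) - ∑ j, f (t j))
          ∂(Measure.pi fun _ : Fin k => Φ ω)) * G (Λ ω) ∂P
        = ∫⁻ ω, (expNeg (∫⁻ y, (1 - expNeg (f y))
              * (∫⁻ z, (z.2 : ENNReal) * κ y z.1 ∂(Λ ω)) ∂μ)
            * ∫⁻ t, g t * ∏ j, (∫⁻ z, (z.2 : ENNReal) * κ (t j) z.1 ∂(Λ ω))
                ∂(Measure.pi fun _ : Fin k => μ)) * G (Λ ω) ∂P)
    -- (b) Poisson exponential-moment formula for `Λ`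
    (hb : PoissonExpMoment P Λ ν) :
    ∫⁻ ω, ∫⁻ t in distinctTuples X k,
        g t * expNeg ((∫⁻ y, f y ∂(Φ ω)) - ∑ j, f (t j))
      ∂(Measure.pi fun _ : Fin k => Φ ω) ∂P
      = ∫⁻ t, g t
          * expNeg (∫⁻ z, (1 - expNeg ((z.2 : ENNReal)
              * ∫⁻ y, (1 - expNeg (f y)) * κ y z.1 ∂μ)) ∂ν)
          * ∑ pt : Finpartition (Finset.univ : Finset (Fin k)),
              ∏ J ∈ pt.parts,
                ∫⁻ z, expNeg ((z.2 : ENNReal) * ∫⁻ y, (1 - expNeg (f y)) * κ y z.1 ∂μ)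
                  * ((z.2 : ENNReal) ^ J.card * ∏ j ∈ J, κ (t j) z.1) ∂ν
        ∂(Measure.pi fun _ : Fin k => μ) :=
  sncp_reduced_palm_campbell_laplace_general P μ ν κ hκ Λ hΛmeas hΛ Φ k hk f hf g hg ha hb
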